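/- Let A be a dense subalgebra of a Banach algebra B. If {I_α : α ∈ A} is a family of closed two-sided ideals of A such that I_α = (closure of I_α in B) ∩ A for all α, then ∩_α I_α = (closure of ∩_α I_α in B) ∩ A. -/

import Mathlib

open Set

theorem preimage_closure_image_iInter_subset {X Y ι : Type*} [TopologicalSpace Y] (f : X → Y)
    {s : ι → Set X} (hs : ∀ i, f ⁻¹' closure (f '' s i) ⊆ s i) :
    f ⁻¹' closure (f '' ⋂ i, s i) ⊆ ⋂ i, s i :=
  subset_iInter fun i =>
    (preimage_mono (closure_mono (image_mono (iInter_subset s i)))).trans (hs i)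

theorem inter_of_recoverable_ideals_recoverable_general
    {B : Type*} [NormedRing B] [NormedAlgebra ℂ B]
    (S : Subalgebra ℂ B)
    {α : Type*} (I : α → TwoSidedIdeal S)
    (hrec : ∀ (j : α) (a : S), a ∈ I j ↔ (a : B) ∈ closure (Subtype.val '' (I j : Set S))) :
    ∀ a : S, (∀ j : α, a ∈ I j) ↔
      (a : B) ∈ closure (Subtype.val '' {b : S | ∀ j : α, b ∈ I j}) := by
  intro a
  rw [ofPred_forall]
  exact ⟨fun h => subset_closure (mem_image_of_mem _ (mem_iInter.2 h)),
    fun h => mem_iInter.1 <|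
      preimage_closure_image_iInter_subset Subtype.val (fun j b hb => (hrec j b).2 hb) h⟩

/-- Let `A` be a dense subalgebra of a Banach algebra `B`, and let `{I_j}` be a family of
closed two-sided ideals of `A` such that `I_j = (closure of I_j in B) ∩ A` for every `j`.
Then `⋂_j I_j = (closure of ⋂_j I_j in B) ∩ A`. -/
theorem inter_of_recoverable_ideals_recoverable
    {B : Type*} [NormedRing B] [NormedAlgebra ℂ B] [CompleteSpace B]
    (S : Subalgebra ℂ B) (hdense : Dense (S : Set B))
    {α : Type*} (I : α → TwoSidedIdeal S)
    (hclosed : ∀ j : α, IsClosed ((I j : Set S)))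
    (hrec : ∀ (j : α) (a : S), a ∈ I j ↔ (a : B) ∈ closure (Subtype.val '' (I j : Set S))) :
    ∀ a : S, (∀ j : α, a ∈ I j) ↔
      (a : B) ∈ closure (Subtype.val '' {b : S | ∀ j : α, b ∈ I j}) :=
  inter_of_recoverable_ideals_recoverable_general S I hrec
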